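/- The explicit Nil geodesic has constant speed with respect to the Nil metric: for all t ∈ ℝ, x′(t)² + (1 + x(t)²)·y′(t)² − 2·x(t)·y′(t)·z′(t) + z′(t)² = c² + w², where x′, y′, z′ denote the derivatives of the coordinate functions of γ. -/

import Mathlib

/-!
Writing `θ = w t + α`, one has `x' = c cos θ` and `y' = c sin θ`, and the double-angle and
sum-to-product formulas give `z' = w + x y'`. The Nil form is a sum of squares,
`u₁² + (1 + p₁²) u₂² - 2 p₁ u₂ u₃ + u₃² = u₁² + u₂² + (u₃ - p₁ u₂)²`, so the squared speed is
`c² cos² θ + c² sin² θ + w² = c² + w²`.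
-/

open Real

namespace NilGeodesic

variable (c α w : ℝ)

noncomputable def x (t : ℝ) : ℝ := (c / w) * (sin (w * t + α) - sin α)

noncomputable def y (t : ℝ) : ℝ := -(c / w) * (cos (w * t + α) - cos α)

noncomputable def z (t : ℝ) : ℝ :=
  t * (w + c ^ 2 / (2 * w))
    - (c ^ 2 / (4 * w ^ 2)) * (sin (2 * w * t + 2 * α) - sin (2 * α))
    + (c ^ 2 / (2 * w ^ 2)) * (sin (w * t + 2 * α) - sin (2 * α) - sin (w * t))

variable {c α w}

lemma hasDerivAt_mul_add (a b t : ℝ) : HasDerivAt (fun t => a * t + b) a t := by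
  simpa using ((hasDerivAt_id t).const_mul a).add_const b

lemma hasDerivAt_x (hw : w ≠ 0) (t : ℝ) : HasDerivAt (x c α w) (c * cos (w * t + α)) t := by
  have h := (((hasDerivAt_mul_add w α t).sin).sub_const (sin α)).const_mul (c / w)
  exact h.congr_deriv (by field_simp)

lemma hasDerivAt_y (hw : w ≠ 0) (t : ℝ) : HasDerivAt (y c α w) (c * sin (w * t + α)) t := by
  have h := (((hasDerivAt_mul_add w α t).cos).sub_const (cos α)).const_mul (-(c / w))
  exact h.congr_deriv (by field_simp)

lemma hasDerivAt_z (hw : w ≠ 0) (t : ℝ) :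
    HasDerivAt (z c α w) (w + x c α w t * (c * sin (w * t + α))) t := by
  have hlin : HasDerivAt (fun t => t * (w + c ^ 2 / (2 * w))) (w + c ^ 2 / (2 * w)) t := by
    simpa using (hasDerivAt_id t).mul_const (w + c ^ 2 / (2 * w))
  have h := (hlin.sub
      (((hasDerivAt_mul_add (2 * w) (2 * α) t).sin.sub_const (sin (2 * α))).const_mul
        (c ^ 2 / (4 * w ^ 2)))).add
    ((((hasDerivAt_mul_add w (2 * α) t).sin.sub_const (sin (2 * α))).sub
      ((hasDerivAt_id t).const_mul w).sin).const_mul (c ^ 2 / (2 * w ^ 2)))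
  set θ := w * t + α
  have hcos_double : cos (2 * w * t + 2 * α) = 1 - 2 * sin θ ^ 2 := by
    rw [show 2 * w * t + 2 * α = 2 * θ by ring, cos_two_mul, cos_sq']
    ring
  have hcos_add : cos (w * t + 2 * α) = cos θ * cos α - sin θ * sin α := by
    rw [show w * t + 2 * α = θ + α by ring, cos_add]
  have hcos_sub : cos (w * id t) = cos θ * cos α + sin θ * sin α := by
    rw [id, show w * t = θ - α by ring, cos_sub]
  refine HasDerivAt.congr_deriv (f := z c α w) h ?_
  rw [hcos_double, hcos_add, hcos_sub, x]
  field_simp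
  ring

end NilGeodesic

lemma nil_quadratic_form_eq_sum_sq (p u₁ u₂ u₃ : ℝ) :
    u₁ ^ 2 + (1 + p ^ 2) * u₂ ^ 2 - 2 * p * u₂ * u₃ + u₃ ^ 2
      = u₁ ^ 2 + u₂ ^ 2 + (u₃ - p * u₂) ^ 2 := by
  ring

theorem nil_geodesic_constant_speed (c α w : ℝ) (hw : w ≠ 0)
    (x y z : ℝ → ℝ)
    (hx : ∀ t, x t = (c / w) * (Real.sin (w * t + α) - Real.sin α))
    (hy : ∀ t, y t = -(c / w) * (Real.cos (w * t + α) - Real.cos α))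
    (hz : ∀ t, z t =
      t * (w + c ^ 2 / (2 * w))
      - (c ^ 2 / (4 * w ^ 2)) * (Real.sin (2 * w * t + 2 * α) - Real.sin (2 * α))
      + (c ^ 2 / (2 * w ^ 2)) *
          (Real.sin (w * t + 2 * α) - Real.sin (2 * α) - Real.sin (w * t))) :
    ∀ t : ℝ,
      (deriv x t) ^ 2 + (1 + (x t) ^ 2) * (deriv y t) ^ 2
        - 2 * x t * deriv y t * deriv z t + (deriv z t) ^ 2 = c ^ 2 + w ^ 2 := by
  intro t
  obtain rfl : x = NilGeodesic.x c α w := funext hx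
  obtain rfl : y = NilGeodesic.y c α w := funext hy
  obtain rfl : z = NilGeodesic.z c α w := funext hz
  rw [(NilGeodesic.hasDerivAt_x hw t).deriv, (NilGeodesic.hasDerivAt_y hw t).deriv,
    (NilGeodesic.hasDerivAt_z hw t).deriv, nil_quadratic_form_eq_sum_sq, add_sub_cancel_right]
  linear_combination c ^ 2 * cos_sq_add_sin_sq (w * t + α)
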